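/- Let d ≥ 1 be an integer, let g be an ℕ₀-valued random variable with subexponential density on the lattice dℕ, and let k ≥ 1 be a fixed integer. If g₁, …, g_k are independent copies of g, then ℙ(g₁ + … + g_k = n) ~ k·ℙ(g = n) as n → ∞ along multiples of d. -/

import Mathlib

/-!
By independence, the law `q k` of `g₁ + ⋯ + g_k` satisfies `q (k + 1) = q k ∗ p`, so the theorem
follows by induction on `k` from a single step: if `a ≥ 0` is summable, lives on `dℕ` and
`a (d m) / p (d m) → c`, then `(a ∗ p)(d m) / p (d m) → c ∑ p + ∑ a`.
For that step, cut the convolution at a fixed `M` into a head `i ≤ M`, a middle part and a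
tail `n - i ≤ M`. Since `p (n - i) / p n → 1` for each fixed `i`, the head tends to `∑_{i ≤ M} a i`
and the tail to `c ∑_{j ≤ M} p j`. Eventually `a ≤ C p`, so the middle part is at most `C` times
the middle part of `p ∗ p`, which by subexponentiality is asymptotically
`2 ∑ p - 2 ∑_{j ≤ M} p j`; this vanishes as `M → ∞`.
-/

/-- A power series with coefficient sequence `g`, non-negative coefficients and radius of
convergence `ρ ∈ (0,∞)`, belongs to the class `𝒮_d`. -/
def SubexpClass (d : ℕ) (g : ℕ → ℝ) (ρ : ℝ) : Prop :=
  1 ≤ d ∧ 0 < ρ ∧ (∀ n, 0 ≤ g n) ∧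
  (∀ n, ¬ d ∣ n → g n = 0) ∧
  (∃ N, ∀ n, N ≤ n → d ∣ n → 0 < g n) ∧
  Summable (fun n => g n * ρ ^ n) ∧
  (∀ r : ℝ, ρ < r → ¬ Summable (fun n => g n * r ^ n)) ∧
  Filter.Tendsto (fun m => g (d * m) / g (d * m + d)) Filter.atTop (nhds (ρ ^ d)) ∧
  Filter.Tendsto
    (fun m => (∑ i ∈ Finset.range (d * m + 1), g i * g (d * m - i)) / g (d * m))
    Filter.atTop (nhds (2 * ∑' n, g n * ρ ^ n))


open Filter Topology Finset MeasureTheory ProbabilityTheory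

theorem tendsto_of_eventually_squeeze {α ι β : Type*} [TopologicalSpace β] [LinearOrder β]
    [OrderTopology β] {la : Filter α} {l : Filter ι} [l.NeBot] {f : α → β} {g h : ι → α → β}
    {ℓg ℓh : ι → β} {L : β}
    (hg : ∀ᶠ i in l, Tendsto (g i) la (𝓝 (ℓg i))) (hh : ∀ᶠ i in l, Tendsto (h i) la (𝓝 (ℓh i)))
    (hℓg : Tendsto ℓg l (𝓝 L)) (hℓh : Tendsto ℓh l (𝓝 L))
    (hgf : ∀ᶠ i in l, ∀ᶠ x in la, g i x ≤ f x) (hfh : ∀ᶠ i in l, ∀ᶠ x in la, f x ≤ h i x) :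
    Tendsto f la (𝓝 L) := by
  refine tendsto_order.2 ⟨fun b hb => ?_, fun b hb => ?_⟩
  · obtain ⟨i, hgi, hbi, hgfi⟩ := (hg.and ((hℓg.eventually (lt_mem_nhds hb)).and hgf)).exists
    filter_upwards [hgi.eventually (lt_mem_nhds hbi), hgfi] with x h₁ h₂ using h₁.trans_le h₂
  · obtain ⟨i, hhi, hbi, hfhi⟩ := (hh.and ((hℓh.eventually (gt_mem_nhds hb)).and hfh)).exists
    filter_upwards [hhi.eventually (gt_mem_nhds hbi), hfhi] with x h₁ h₂ using h₂.trans_lt h₁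

theorem tendsto_div_sub_of_tendsto_div_succ {x : ℕ → ℝ} (hx : ∀ᶠ m in atTop, x m ≠ 0)
    (h : Tendsto (fun m => x m / x (m + 1)) atTop (𝓝 1)) (j : ℕ) :
    Tendsto (fun m => x (m - j) / x m) atTop (𝓝 1) := by
  induction j with
  | zero =>
    refine tendsto_const_nhds.congr' ?_
    filter_upwards [hx] with m hm using by simp [hm]
  | succ j ih =>
    have h' := (h.comp (tendsto_sub_atTop_nat (j + 1))).mul ih
    rw [one_mul] at h'
    refine h'.congr' ?_
    filter_upwards [eventually_ge_atTop (j + 1), (tendsto_sub_atTop_nat j).eventually hx]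
      with m hm hxm
    have : m - (j + 1) + 1 = m - j := by omega
    simp only [Function.comp_apply, this]
    exact div_mul_div_cancel₀ hxm

theorem eventually_le_mul_of_tendsto_div {d : ℕ} (hd : 0 < d) {a p : ℕ → ℝ} {c : ℝ}
    (ha : ∀ n, ¬ d ∣ n → a n = 0) (hp0 : ∀ n, 0 ≤ p n) (hpos : ∀ᶠ m in atTop, 0 < p (d * m))
    (hc : Tendsto (fun m => a (d * m) / p (d * m)) atTop (𝓝 c)) :
    ∃ C, ∀ᶠ n in atTop, a n ≤ C * p n := by
  refine ⟨|c| + 1, ?_⟩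
  obtain ⟨N, hN⟩ := eventually_atTop.1
    (hpos.and (hc.eventually (gt_mem_nhds (lt_of_le_of_lt (le_abs_self c) (lt_add_one _)))))
  filter_upwards [eventually_ge_atTop (d * N)] with n hn
  by_cases hdn : d ∣ n
  · obtain ⟨m, rfl⟩ := hdn
    obtain ⟨hpm, hlt⟩ := hN m (Nat.le_of_mul_le_mul_left hn hd)
    exact ((div_lt_iff₀ hpm).1 hlt).le
  · rw [ha n hdn]
    exact mul_nonneg (by positivity) (hp0 n)

-- Only meaningful for `s ⊆ range (n + 1)`: beyond that `n - i` truncates to `0`.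
def convOn (s : Finset ℕ) (a b : ℕ → ℝ) (n : ℕ) : ℝ := ∑ i ∈ s, a i * b (n - i)

theorem convOn_range_eq_add_add (a b : ℕ → ℝ) {M n : ℕ} (h : 2 * M + 1 ≤ n) :
    convOn (range (n + 1)) a b n =
      convOn (range (M + 1)) a b n + convOn (Ico (M + 1) (n - M)) a b n
        + convOn (range (M + 1)) b a n := by
  have hreflect : ∑ i ∈ Ico (n - M) (n + 1), a i * b (n - i) = convOn (range (M + 1)) b a n := by
    refine sum_nbij' (n - ·) (n - ·) ?_ ?_ ?_ ?_ fun i hi => ?_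
    any_goals intro i hi; simp only [mem_Ico, mem_range] at hi ⊢; omega
    rw [Nat.sub_sub_self (Nat.lt_succ_iff.1 (mem_Ico.1 hi).2), mul_comm]
  simp only [convOn, range_eq_Ico] at hreflect ⊢
  rw [← hreflect, sum_Ico_consecutive _ (by omega) (by omega),
    sum_Ico_consecutive _ (by omega) (by omega)]

theorem convOn_nonneg {s : Finset ℕ} {a b : ℕ → ℝ} (ha : ∀ n, 0 ≤ a n) (hb : ∀ n, 0 ≤ b n)
    (n : ℕ) : 0 ≤ convOn s a b n :=
  sum_nonneg fun i _ => mul_nonneg (ha i) (hb _)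

theorem convOn_le_mul_convOn {s : Finset ℕ} {a b p : ℕ → ℝ} {C : ℝ} (hb : ∀ n, 0 ≤ b n)
    (h : ∀ i ∈ s, a i ≤ C * p i) (n : ℕ) : convOn s a b n ≤ C * convOn s p b n := by
  rw [convOn, convOn, mul_sum]
  refine sum_le_sum fun i hi => ?_
  rw [← mul_assoc]
  exact mul_le_mul_of_nonneg_right (h i hi) (hb _)

theorem add_convOn_le_convOn_range {a b : ℕ → ℝ} (ha : ∀ n, 0 ≤ a n) (hb : ∀ n, 0 ≤ b n)
    {M n : ℕ} (h : 2 * M + 1 ≤ n) :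
    convOn (range (M + 1)) a b n + convOn (range (M + 1)) b a n ≤ convOn (range (n + 1)) a b n := by
  rw [convOn_range_eq_add_add a b h]
  linarith [convOn_nonneg ha hb (s := Ico (M + 1) (n - M)) n]

theorem convOn_range_le_add_mul {a p : ℕ → ℝ} {C : ℝ} (hp : ∀ n, 0 ≤ p n)
    {M n : ℕ} (hC : ∀ i, M < i → a i ≤ C * p i) (h : 2 * M + 1 ≤ n) :
    convOn (range (n + 1)) a p n ≤ convOn (range (M + 1)) a p n + convOn (range (M + 1)) p a n
      + C * (convOn (range (n + 1)) p p n
        - (convOn (range (M + 1)) p p n + convOn (range (M + 1)) p p n)) := by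
  have hmid := convOn_le_mul_convOn (s := Ico (M + 1) (n - M)) hp
    (fun i hi => hC i (mem_Ico.1 hi).1) n
  rw [convOn_range_eq_add_add a p h, convOn_range_eq_add_add p p h]
  linarith

theorem convOn_range_eq_zero_of_not_dvd {d : ℕ} {a b : ℕ → ℝ} (ha : ∀ n, ¬ d ∣ n → a n = 0)
    (hb : ∀ n, ¬ d ∣ n → b n = 0) {n : ℕ} (hn : ¬ d ∣ n) : convOn (range (n + 1)) a b n = 0 := by
  refine sum_eq_zero fun i hi => ?_
  by_cases hdi : d ∣ i
  · have : ¬ d ∣ n - i := fun h => hn <| by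
      simpa [Nat.sub_add_cancel (Nat.lt_succ_iff.1 (mem_range.1 hi))] using dvd_add h hdi
    rw [hb _ this, mul_zero]
  · rw [ha i hdi, zero_mul]

theorem tendsto_convOn_range_div {d : ℕ} {w b p : ℕ → ℝ} {c : ℝ} (hw : ∀ n, ¬ d ∣ n → w n = 0)
    (hb : ∀ j, Tendsto (fun m => b (d * m - d * j) / p (d * m)) atTop (𝓝 c)) (M : ℕ) :
    Tendsto (fun m => convOn (range (M + 1)) w b (d * m) / p (d * m)) atTop
      (𝓝 (c * ∑ i ∈ range (M + 1), w i)) := by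
  simp only [convOn, sum_div, mul_sum]
  refine tendsto_finsetSum _ fun i _ => ?_
  by_cases hdi : d ∣ i
  · obtain ⟨j, rfl⟩ := hdi
    simpa only [mul_div_assoc, mul_comm c] using (hb j).const_mul (w (d * j))
  · simpa only [hw i hdi, zero_mul, mul_zero, zero_div] using tendsto_const_nhds

namespace SubexpClass

variable {d : ℕ} {p : ℕ → ℝ}

theorem eq_zero_of_not_dvd {ρ : ℝ} (hp : SubexpClass d p ρ) : ∀ n, ¬ d ∣ n → p n = 0 :=
  hp.2.2.2.1

theorem eventually_pos {ρ : ℝ} (hp : SubexpClass d p ρ) : ∀ᶠ m in atTop, 0 < p (d * m) := by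
  obtain ⟨hd, -, -, -, ⟨N, hN⟩, -⟩ := hp
  filter_upwards [eventually_ge_atTop N] with m hm
  exact hN _ (hm.trans (Nat.le_mul_of_pos_left m hd)) (dvd_mul_right d m)

theorem tendsto_div_sub (hp : SubexpClass d p 1) (j : ℕ) :
    Tendsto (fun m => p (d * m - d * j) / p (d * m)) atTop (𝓝 1) := by
  have hpos := hp.eventually_pos
  obtain ⟨-, -, -, -, -, -, -, hratio, -⟩ := hp
  simp only [one_pow, ← Nat.mul_succ] at hratio
  simpa only [Nat.mul_sub] using
    tendsto_div_sub_of_tendsto_div_succ (hpos.mono fun m h => h.ne') hratio j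

theorem tendsto_shift_div (hp : SubexpClass d p 1) {a : ℕ → ℝ} {c : ℝ}
    (hc : Tendsto (fun m => a (d * m) / p (d * m)) atTop (𝓝 c)) (j : ℕ) :
    Tendsto (fun m => a (d * m - d * j) / p (d * m)) atTop (𝓝 c) := by
  have h := ((hc.comp (tendsto_sub_atTop_nat j)).mul (hp.tendsto_div_sub j))
  rw [mul_one] at h
  refine h.congr' ?_
  filter_upwards [(tendsto_sub_atTop_nat j).eventually hp.eventually_pos] with m hm
  simp only [Function.comp_apply, ← Nat.mul_sub]
  exact div_mul_div_cancel₀ hm.ne'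

theorem tendsto_convOn_range_add_div (hp : SubexpClass d p 1) {a : ℕ → ℝ} {c : ℝ}
    (ha : ∀ n, ¬ d ∣ n → a n = 0) (hc : Tendsto (fun m => a (d * m) / p (d * m)) atTop (𝓝 c))
    (M : ℕ) :
    Tendsto (fun m => (convOn (range (M + 1)) a p (d * m) + convOn (range (M + 1)) p a (d * m))
      / p (d * m)) atTop (𝓝 (∑ i ∈ range (M + 1), a i + c * ∑ i ∈ range (M + 1), p i)) := by
  have hhead := tendsto_convOn_range_div ha hp.tendsto_div_sub M
  rw [one_mul] at hhead
  simpa only [add_div] using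
    hhead.add (tendsto_convOn_range_div hp.eq_zero_of_not_dvd (hp.tendsto_shift_div hc) M)

theorem tendsto_convOn_div (hp : SubexpClass d p 1) {a : ℕ → ℝ} {c : ℝ} (ha0 : ∀ n, 0 ≤ a n)
    (ha : ∀ n, ¬ d ∣ n → a n = 0) (hsum : Summable a)
    (hc : Tendsto (fun m => a (d * m) / p (d * m)) atTop (𝓝 c)) :
    Tendsto (fun m => convOn (range (d * m + 1)) a p (d * m) / p (d * m)) atTop
      (𝓝 (c * ∑' n, p n + ∑' n, a n)) := by
  have hpos := hp.eventually_pos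
  have hends := hp.tendsto_convOn_range_add_div ha hc
  have hends_p := hp.tendsto_convOn_range_add_div hp.eq_zero_of_not_dvd
    (tendsto_const_nhds.congr' (hpos.mono fun m hm => (div_self hm.ne').symm))
  obtain ⟨hd, -, hp0, -, -, hpsum, -, -, hconv⟩ := hp
  simp only [one_pow, mul_one] at hpsum hconv
  change Tendsto (fun m => convOn (range (d * m + 1)) p p (d * m) / p (d * m)) _ _ at hconv
  obtain ⟨C, hC⟩ := eventually_le_mul_of_tendsto_div hd ha hp0 hpos hc
  obtain ⟨N, hN⟩ := eventually_atTop.1 hC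
  have hP : Tendsto (fun M => ∑ i ∈ range (M + 1), p i) atTop (𝓝 (∑' n, p n)) :=
    hpsum.tendsto_sum_tsum_nat.comp (tendsto_add_atTop_nat 1)
  have hℓg : Tendsto (fun M => ∑ i ∈ range (M + 1), a i + c * ∑ i ∈ range (M + 1), p i)
      atTop (𝓝 (c * ∑' n, p n + ∑' n, a n)) := by
    rw [add_comm]
    exact (hsum.tendsto_sum_tsum_nat.comp (tendsto_add_atTop_nat 1)).add (hP.const_mul c)
  have hℓh : Tendsto (fun M => ∑ i ∈ range (M + 1), a i + c * ∑ i ∈ range (M + 1), p i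
      + C * (2 * ∑' n, p n - (∑ i ∈ range (M + 1), p i + 1 * ∑ i ∈ range (M + 1), p i))) atTop
      (𝓝 (c * ∑' n, p n + ∑' n, a n)) := by
    convert hℓg.add ((tendsto_const_nhds.sub (hP.add (hP.const_mul 1))).const_mul C) using 2
    ring
  have hlarge (M : ℕ) : ∀ᶠ m in atTop, 2 * M + 1 ≤ d * m ∧ 0 < p (d * m) := by
    filter_upwards [eventually_ge_atTop (2 * M + 1), hpos] with m hm hpm
    exact ⟨hm.trans (Nat.le_mul_of_pos_left m hd), hpm⟩
  refine tendsto_of_eventually_squeeze (.of_forall hends)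
    (h := fun M m => (convOn (range (M + 1)) a p (d * m) + convOn (range (M + 1)) p a (d * m)
      + C * (convOn (range (d * m + 1)) p p (d * m)
        - (convOn (range (M + 1)) p p (d * m) + convOn (range (M + 1)) p p (d * m)))) / p (d * m))
    (.of_forall fun M => ((hends M).add ((hconv.sub (hends_p M)).const_mul C)).congr
      fun m => by ring)
    hℓg hℓh (.of_forall fun M => ?_) (eventually_atTop.2 ⟨N, fun M hM => ?_⟩)
  · filter_upwards [hlarge M] with m ⟨hM, hpm⟩
    exact div_le_div_of_nonneg_right (add_convOn_le_convOn_range ha0 hp0 hM) hpm.le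
  · filter_upwards [hlarge M] with m ⟨hM, hpm⟩
    exact div_le_div_of_nonneg_right
      (convOn_range_le_add_mul hp0 (fun i hi => hN i (by omega)) hM) hpm.le

end SubexpClass

section IndepSum

variable {Ω : Type*} [MeasurableSpace Ω] {μ : Measure Ω}

theorem hasSum_measure_eq_toReal [IsProbabilityMeasure μ] {X : Ω → ℕ} (hX : Measurable X) :
    HasSum (fun n => (μ {ω | X ω = n}).toReal) 1 := by
  have h : ∑' n, μ (X ⁻¹' {n}) = 1 := by
    rw [← measure_iUnion (fun n n' hne => Set.disjoint_left.2 fun ω h h' => hne (h.symm.trans h'))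
      fun n => hX (measurableSet_singleton n), ← Set.preimage_iUnion,
      Set.iUnion_singleton_eq_range, Set.range_id', Set.preimage_univ, measure_univ]
  have hsum := ENNReal.hasSum_toReal (h.symm ▸ ENNReal.one_ne_top)
  rwa [← ENNReal.tsum_toReal_eq fun n => measure_ne_top μ _, h, ENNReal.toReal_one] at hsum

theorem measure_sum_range_succ_eq_convOn {gs : ℕ → Ω → ℕ} (hmeas : ∀ i, Measurable (gs i))
    (hiid : iIndepFun gs μ) (k n : ℕ) :
    μ {ω | ∑ i ∈ range (k + 1), gs i ω = n} = ∑ i ∈ range (n + 1),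
      μ {ω | ∑ j ∈ range k, gs j ω = i} * μ {ω | gs k ω = n - i} := by
  have hindep : IndepFun (fun ω => ∑ j ∈ range k, gs j ω) (gs k) μ := by
    simpa only [Finset.sum_fn] using hiid.indepFun_sum_range_succ hmeas k
  have hset : {ω | ∑ i ∈ range (k + 1), gs i ω = n} = ⋃ i ∈ range (n + 1),
      {ω | ∑ j ∈ range k, gs j ω = i} ∩ {ω | gs k ω = n - i} := by
    ext ω
    simp only [Set.mem_ofPred_eq, Set.mem_iUnion, Set.mem_inter_iff, mem_range, sum_range_succ]
    exact ⟨fun h => ⟨_, by omega, rfl, by omega⟩, fun ⟨i, _, h₁, h₂⟩ => by omega⟩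
  rw [hset, measure_biUnion_finset]
  · exact sum_congr rfl fun i _ => hindep.measure_inter_preimage_eq_mul {i} {n - i}
      (measurableSet_singleton _) (measurableSet_singleton _)
  · exact fun i _ i' _ hne => Set.disjoint_left.2 fun ω h h' => hne (h.1.symm.trans h'.1)
  · exact fun i _ => (measurableSet_eq_fun (by fun_prop) measurable_const).inter
      (measurableSet_eq_fun (hmeas k) measurable_const)

theorem measure_sum_range_succ_toReal_eq_convOn [IsFiniteMeasure μ] {gs : ℕ → Ω → ℕ}
    (hmeas : ∀ i, Measurable (gs i)) (hiid : iIndepFun gs μ) (k n : ℕ) :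
    (μ {ω | ∑ i ∈ range (k + 1), gs i ω = n}).toReal = convOn (range (n + 1))
      (fun i => (μ {ω | ∑ j ∈ range k, gs j ω = i}).toReal) (fun i => (μ {ω | gs k ω = i}).toReal)
      n := by
  rw [measure_sum_range_succ_eq_convOn hmeas hiid, ENNReal.toReal_sum fun i _ =>
    ENNReal.mul_ne_top (measure_ne_top μ _) (measure_ne_top μ _)]
  simp only [convOn, ENNReal.toReal_mul]

end IndepSum

theorem iid_sum_subexp_equivalence_general
    {Ω : Type*} [MeasurableSpace Ω] (μ : Measure Ω) [IsProbabilityMeasure μ]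
    (d : ℕ) (p : ℕ → ℝ) (hp : SubexpClass d p 1)
    (k : ℕ)
    (gs : ℕ → Ω → ℕ) (hgsmeas : ∀ i, Measurable (gs i))
    (hdist : ∀ i n, (μ {ω | gs i ω = n}).toReal = p n)
    (hiid : iIndepFun gs μ) :
    Filter.Tendsto
      (fun m => (μ {ω | ∑ i ∈ Finset.range k, gs i ω = d * m}).toReal / p (d * m))
      Filter.atTop (nhds k) := by
  set q : ℕ → ℕ → ℝ := fun k n => (μ {ω | ∑ i ∈ range k, gs i ω = n}).toReal
  have hq_sum (k : ℕ) : HasSum (q k) 1 := hasSum_measure_eq_toReal (by fun_prop)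
  have hq_succ (k n : ℕ) : q (k + 1) n = convOn (range (n + 1)) (q k) p n := by
    simpa only [hdist] using measure_sum_range_succ_toReal_eq_convOn hgsmeas hiid k n
  have hq_zero {n : ℕ} (hn : n ≠ 0) : q 0 n = 0 := by simp [q, Ne.symm hn]
  have hq_lattice (k : ℕ) : ∀ n, ¬ d ∣ n → q k n = 0 := by
    induction k with
    | zero => exact fun n hn => hq_zero (by rintro rfl; exact hn (dvd_zero d))
    | succ k ih => exact fun n hn =>
        (hq_succ k n).trans (convOn_range_eq_zero_of_not_dvd ih hp.eq_zero_of_not_dvd hn)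
  have hp_sum : ∑' n, p n = 1 := by simpa [q, hdist] using (hq_sum 1).tsum_eq
  suffices h : ∀ k : ℕ, Tendsto (fun m => q k (d * m) / p (d * m)) atTop (𝓝 k) from h k
  intro k
  induction k with
  | zero =>
    refine tendsto_const_nhds.congr' ?_
    filter_upwards [eventually_ge_atTop 1] with m hm
    rw [hq_zero (Nat.mul_ne_zero (Nat.one_le_iff_ne_zero.1 hp.1) (by omega)), zero_div, Nat.cast_zero]
  | succ k ih =>
    have h := hp.tendsto_convOn_div (fun n => ENNReal.toReal_nonneg) (hq_lattice k)
      (hq_sum k).summable ih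
    rw [hp_sum, (hq_sum k).tsum_eq, mul_one] at h
    push_cast
    exact h.congr fun m => by rw [hq_succ]

/-- If `g` is an `ℕ`-valued random variable whose density `p` is subexponential on the lattice
`dℕ` (i.e. `p ∈ 𝒮_d` with radius of convergence `1`), `k ≥ 1` is fixed, and `g₁, …, g_k` are
independent copies of `g`, then `ℙ(g₁ + ⋯ + g_k = n) ∼ k · ℙ(g = n)` along multiples of `d`. -/
theorem iid_sum_subexp_equivalence
    {Ω : Type*} [MeasurableSpace Ω] (μ : Measure Ω) [IsProbabilityMeasure μ]
    (d : ℕ) (p : ℕ → ℝ) (hp : SubexpClass d p 1)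
    (k : ℕ) (hk : 1 ≤ k)
    (gs : ℕ → Ω → ℕ) (hgsmeas : ∀ i, Measurable (gs i))
    (hdist : ∀ i n, (μ {ω | gs i ω = n}).toReal = p n)
    (hiid : iIndepFun gs μ) :
    Filter.Tendsto
      (fun m => (μ {ω | ∑ i ∈ Finset.range k, gs i ω = d * m}).toReal / p (d * m))
      Filter.atTop (nhds k) :=
  iid_sum_subexp_equivalence_general μ d p hp k gs hgsmeas hdist hiid
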